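/- arXiv:2011.14176 — 8 statements merged into one kernel-verified Lean document; each statement's English description precedes it below -/
import Mathlib

section
/- Let R = ℂ[[t]] and let b₁,…,b₆ ∈ R with ∑ᵢ bᵢ = 0. Suppose a, b, c, d ∈ R satisfy: t ∣ c, t ∣ (d−a)(b₁+b₂) − (b₁+b₂)²·(c/t), and t ∣ (d−a)(b₁+b₂+b₃+b₄) − (b₁+b₂+b₃+b₄)²·(c/t), where c/t denotes the element c' with tc' = c. If t ∤ b₁+b₂, t ∤ b₃+b₄, and t ∤ b₅+b₆, then t ∣ (c/t) and t ∣ (d−a). -/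
open PowerSeries

abbrev R := PowerSeries ℂ

theorem eq_zero_and_eq_zero_of_mul_eq_sq_mul {K : Type*} [CommRing K] [IsDomain K]
    {u v C D : K} (hu : u ≠ 0) (hv : v ≠ 0) (huv : u + v ≠ 0)
    (h₁ : D * u = u ^ 2 * C) (h₂ : D * (u + v) = (u + v) ^ 2 * C) :
    C = 0 ∧ D = 0 := by
  have hD : D = u * C := mul_right_cancel₀ hu (by linear_combination h₁)
  have hC : C = 0 := by
    have : (u + v) * v * C = 0 := by linear_combination (u + v) * hD - h₂
    simpa [huv, hv] using this
  exact ⟨hC, by rw [hD, hC, mul_zero]⟩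

theorem stmt_2_general (b₁ b₂ b₃ b₄ b₅ b₆ : R)
    (hsum : b₁ + b₂ + b₃ + b₄ + b₅ + b₆ = 0)
    (a d c' : R)
    (h1 : X ∣ (d - a) * (b₁ + b₂) - (b₁ + b₂) ^ 2 * c')
    (h2 : X ∣ (d - a) * (b₁ + b₂ + b₃ + b₄) - (b₁ + b₂ + b₃ + b₄) ^ 2 * c')
    (hb12 : ¬ X ∣ b₁ + b₂) (hb34 : ¬ X ∣ b₃ + b₄) (hb56 : ¬ X ∣ b₅ + b₆) :
    X ∣ c' ∧ X ∣ (d - a) := by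
  simp only [X_dvd_iff, map_add, map_sub, map_mul, map_pow] at h1 h2 hb12 hb34 hb56 ⊢
  have hs := congrArg (constantCoeff (R := ℂ)) hsum
  simp only [map_add, map_zero] at hs
  set u := constantCoeff b₁ + constantCoeff b₂
  set v := constantCoeff b₃ + constantCoeff b₄
  have huv : u + v ≠ 0 := by
    rw [show u + v = -(constantCoeff b₅ + constantCoeff b₆) by linear_combination hs]
    exact neg_ne_zero.mpr hb56
  exact eq_zero_and_eq_zero_of_mul_eq_sq_mul hb12 hb34 huv
    (by linear_combination h1) (by linear_combination h2)

theorem stmt_2 (b₁ b₂ b₃ b₄ b₅ b₆ : R)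
    (hsum : b₁ + b₂ + b₃ + b₄ + b₅ + b₆ = 0)
    (a b c d c' : R) (hc : X * c' = c)
    (h1 : X ∣ (d - a) * (b₁ + b₂) - (b₁ + b₂) ^ 2 * c')
    (h2 : X ∣ (d - a) * (b₁ + b₂ + b₃ + b₄) - (b₁ + b₂ + b₃ + b₄) ^ 2 * c')
    (hb12 : ¬ X ∣ b₁ + b₂) (hb34 : ¬ X ∣ b₃ + b₄) (hb56 : ¬ X ∣ b₅ + b₆) :
    X ∣ c' ∧ X ∣ (d - a) :=
  stmt_2_general b₁ b₂ b₃ b₄ b₅ b₆ hsum a d c' h1 h2 hb12 hb34 hb56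
end

section
/- Let R = ℂ[[t]] and let b₁,…,b₆ ∈ R with ∑ᵢ bᵢ = 0. If t ∣ b₅+b₆ and t ∤ b₁+b₂ and t ∤ b₃+b₄, then setting c = t·(b₁+b₂)⁻¹, the matrix φ = [[1, 0],[−c, 0]] over R is a nontrivial idempotent (φ² = φ, φ ≠ 0, φ ≠ 1) satisfying t ∣ (−c), t ∣ (0−1)(b₁+b₂) − (b₁+b₂)²·(−c/t), and t ∣ (0−1)(b₁+b₂+b₃+b₄) − (b₁+b₂+b₃+b₄)²·(−c/t). -/
open PowerSeries Matrix

theorem PowerSeries.isUnit_of_not_X_dvd {k : Type*} [Field k] {f : k⟦X⟧} (hf : ¬ X ∣ f) :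
    IsUnit f :=
  isUnit_iff_constantCoeff.mpr (isUnit_iff_ne_zero.mpr (X_dvd_iff.not.mp hf))

section LowerTriangularIdempotent

variable {A : Type*} [Ring A]

theorem Matrix.lowerIdempotent_mul_self (a : A) :
    (!![1, 0; a, 0] : Matrix (Fin 2) (Fin 2) A) * !![1, 0; a, 0] = !![1, 0; a, 0] := by
  simp

theorem Matrix.lowerIdempotent_ne_zero [Nontrivial A] (a : A) :
    (!![1, 0; a, 0] : Matrix (Fin 2) (Fin 2) A) ≠ 0 :=
  fun h => one_ne_zero (congrFun (congrFun h 0) 0)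

theorem Matrix.lowerIdempotent_ne_one [Nontrivial A] (a : A) :
    (!![1, 0; a, 0] : Matrix (Fin 2) (Fin 2) A) ≠ 1 :=
  fun h => zero_ne_one (congrFun (congrFun h 1) 1)

end LowerTriangularIdempotent

section Divisibility

variable {S : Type*} [CommRing S]

theorem neg_sub_sq_mul_neg_inverse_eq_zero {u : S} (hu : IsUnit u) :
    (0 - 1) * u - u ^ 2 * -Ring.inverse u = 0 := by
  have hinv : u * Ring.inverse u = 1 := Ring.mul_inverse_cancel u hu
  linear_combination u * hinv

theorem dvd_neg_sub_sq_mul {p s : S} (hs : p ∣ s) (c : S) : p ∣ (0 - 1) * s - s ^ 2 * c :=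
  dvd_sub (dvd_mul_of_dvd_right hs _) (dvd_mul_of_dvd_left (dvd_pow hs two_ne_zero) _)

end Divisibility

theorem stmt_3_general (b₁ b₂ b₃ b₄ b₅ b₆ : R)
    (hsum : b₁ + b₂ + b₃ + b₄ + b₅ + b₆ = 0)
    (h56 : X ∣ b₅ + b₆) (h12 : ¬ X ∣ b₁ + b₂) :
    ∀ c : R, c = X * Ring.inverse (b₁ + b₂) →
      ((!![1, 0; -c, 0] : Matrix (Fin 2) (Fin 2) R) * !![1, 0; -c, 0] = !![1, 0; -c, 0] ∧
        (!![1, 0; -c, 0] : Matrix (Fin 2) (Fin 2) R) ≠ 0 ∧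
        (!![1, 0; -c, 0] : Matrix (Fin 2) (Fin 2) R) ≠ 1 ∧
        X ∣ (-c) ∧
        ∃ c' : R, X * c' = -c ∧
          X ∣ (0 - 1) * (b₁ + b₂) - (b₁ + b₂) ^ 2 * c' ∧
          X ∣ (0 - 1) * (b₁ + b₂ + b₃ + b₄) - (b₁ + b₂ + b₃ + b₄) ^ 2 * c') := by
  rintro c rfl
  have hc' : X * -Ring.inverse (b₁ + b₂) = -(X * Ring.inverse (b₁ + b₂)) := mul_neg _ _
  have h1234 : X ∣ b₁ + b₂ + b₃ + b₄ := by
    rw [show b₁ + b₂ + b₃ + b₄ = -(b₅ + b₆) by linear_combination hsum]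
    exact h56.neg_right
  refine ⟨lowerIdempotent_mul_self _, lowerIdempotent_ne_zero _, lowerIdempotent_ne_one _,
    hc' ▸ dvd_mul_right _ _, _, hc', ?_, dvd_neg_sub_sq_mul h1234 _⟩
  rw [neg_sub_sq_mul_neg_inverse_eq_zero (isUnit_of_not_X_dvd h12)]
  exact dvd_zero _

theorem stmt_3 (b₁ b₂ b₃ b₄ b₅ b₆ : R)
    (hsum : b₁ + b₂ + b₃ + b₄ + b₅ + b₆ = 0)
    (h56 : X ∣ b₅ + b₆) (h12 : ¬ X ∣ b₁ + b₂) (h34 : ¬ X ∣ b₃ + b₄) :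
    ∀ c : R, c = X * Ring.inverse (b₁ + b₂) →
      ((!![1, 0; -c, 0] : Matrix (Fin 2) (Fin 2) R) * !![1, 0; -c, 0] = !![1, 0; -c, 0] ∧
        (!![1, 0; -c, 0] : Matrix (Fin 2) (Fin 2) R) ≠ 0 ∧
        (!![1, 0; -c, 0] : Matrix (Fin 2) (Fin 2) R) ≠ 1 ∧
        X ∣ (-c) ∧
        ∃ c' : R, X * c' = -c ∧
          X ∣ (0 - 1) * (b₁ + b₂) - (b₁ + b₂) ^ 2 * c' ∧
          X ∣ (0 - 1) * (b₁ + b₂ + b₃ + b₄) - (b₁ + b₂ + b₃ + b₄) ^ 2 * c') :=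
  stmt_3_general b₁ b₂ b₃ b₄ b₅ b₆ hsum h56 h12
end

section
/- Let R = ℂ[[t]] and let (b₁,…,b₆) and (c₁,…,c₆) be tuples in R, each summing to zero, and such that none of b₁+b₂, b₃+b₄, b₅+b₆, c₁+c₂, c₃+c₄, c₅+c₆ is divisible by t. Set α₀ = ((c₁+c₂)(b₃+b₄)(c₅+c₆)) / ((b₁+b₂)(c₃+c₄)(b₅+b₆)), δ₀ = 1, β₀ = 0, and γ₀ = t·((c₃+c₄)(b₅+b₆) − (b₃+b₄)(c₅+c₆)) / ((b₁+b₂)(c₃+c₄)(b₅+b₆)). Then the matrix [[α₀, β₀],[γ₀, δ₀]] is invertible over R, t ∣ γ₀, and it satisfies −α₀(b₁+b₂) + (c₁+c₂)δ₀ − (b₁+b₂)(c₁+c₂)(γ₀/t) = 0 and α₀(b₅+b₆) − (c₅+c₆)δ₀ − (b₅+b₆)(c₅+c₆)(γ₀/t) = 0. -/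
open PowerSeries Matrix

theorem Matrix.isUnit_lowerTriangular_fin_two_iff {A : Type*} [CommRing A] (a c : A) :
    IsUnit !![a, 0; c, 1] ↔ IsUnit a := by
  rw [isUnit_iff_isUnit_det, det_fin_two_of, mul_one, zero_mul, sub_zero]

section PairRelations

variable {A : Type*} [CommRing A] {B₁ B₂ B₃ C₁ C₂ C₃ u : A}

theorem relation_first_pair (hu : B₁ * C₂ * B₃ * u = 1) :
    -(C₁ * B₂ * C₃ * u) * B₁ + C₁ * 1 - B₁ * C₁ * ((C₂ * B₃ - B₂ * C₃) * u) = 0 := by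
  linear_combination (-C₁) * hu

theorem relation_last_pair (hB : B₁ + B₂ + B₃ = 0) (hC : C₁ + C₂ + C₃ = 0)
    (hu : B₁ * C₂ * B₃ * u = 1) :
    C₁ * B₂ * C₃ * u * B₃ - C₃ * 1 - B₃ * C₃ * ((C₂ * B₃ - B₂ * C₃) * u) = 0 := by
  linear_combination C₃ * hu - (B₃ * C₃ * C₂ * u) * hB + (B₂ * B₃ * C₃ * u) * hC

end PairRelations

theorem stmt_5 (b₁ b₂ b₃ b₄ b₅ b₆ c₁ c₂ c₃ c₄ c₅ c₆ : R)
    (hbsum : b₁ + b₂ + b₃ + b₄ + b₅ + b₆ = 0)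
    (hcsum : c₁ + c₂ + c₃ + c₄ + c₅ + c₆ = 0)
    (hb12 : ¬ X ∣ b₁ + b₂) (hb34 : ¬ X ∣ b₃ + b₄) (hb56 : ¬ X ∣ b₅ + b₆)
    (hc12 : ¬ X ∣ c₁ + c₂) (hc34 : ¬ X ∣ c₃ + c₄) (hc56 : ¬ X ∣ c₅ + c₆)
    (α₀ β₀ γ₀ δ₀ : R)
    (hα : α₀ = (c₁ + c₂) * (b₃ + b₄) * (c₅ + c₆) *
        Ring.inverse ((b₁ + b₂) * (c₃ + c₄) * (b₅ + b₆)))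
    (hδ : δ₀ = 1) (hβ : β₀ = 0)
    (hγ : γ₀ = X * (((c₃ + c₄) * (b₅ + b₆) - (b₃ + b₄) * (c₅ + c₆)) *
        Ring.inverse ((b₁ + b₂) * (c₃ + c₄) * (b₅ + b₆)))) :
    IsUnit (!![α₀, β₀; γ₀, δ₀] : Matrix (Fin 2) (Fin 2) R) ∧
    X ∣ γ₀ ∧
    ∃ g : R, X * g = γ₀ ∧
      -α₀ * (b₁ + b₂) + (c₁ + c₂) * δ₀ - (b₁ + b₂) * (c₁ + c₂) * g = 0 ∧
      α₀ * (b₅ + b₆) - (c₅ + c₆) * δ₀ - (b₅ + b₆) * (c₅ + c₆) * g = 0 := by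
  subst hα hβ hγ hδ
  have hD : IsUnit ((b₁ + b₂) * (c₃ + c₄) * (b₅ + b₆)) :=
    ((isUnit_of_not_X_dvd hb12).mul (isUnit_of_not_X_dvd hc34)).mul (isUnit_of_not_X_dvd hb56)
  have hDinv := Ring.mul_inverse_cancel _ hD
  have hB : (b₁ + b₂) + (b₃ + b₄) + (b₅ + b₆) = 0 := by linear_combination hbsum
  have hC : (c₁ + c₂) + (c₃ + c₄) + (c₅ + c₆) = 0 := by linear_combination hcsum
  refine ⟨?_, dvd_mul_right _ _, _, rfl, relation_first_pair hDinv, relation_last_pair hB hC hDinv⟩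
  rw [isUnit_lowerTriangular_fin_two_iff]
  exact (((isUnit_of_not_X_dvd hc12).mul (isUnit_of_not_X_dvd hb34)).mul
    (isUnit_of_not_X_dvd hc56)).mul (isUnit_ringInverse.mpr hD)
end

section
/- Let R = ℂ[[t]] and fix positive integers l₁, l₂, l₃. Let B₁, B₂, B₃, D₁, D₂, D₃ ∈ R with (B₁+D₁)+(B₂+D₂)+(B₃+D₃) = 0 (here Bg+Dg plays the role of B_{i_g}+B_{j_g}). There exist α₁, α₂, α₃ ∈ R satisfying t^{l₃}α₃ − t^{l₁}α₁ = B₁+D₁, t^{l₂}α₂ − t^{l₃}α₃ = B₃+D₃, and t^{l₁}α₁ − t^{l₂}α₂ = B₂+D₂, if and only if t^{min(l₀ᵍ, lᵍ)} divides Bg+Dg for g = 1,2,3, where (l₀¹,l₀²,l₀³) = (l₃,l₁,l₂). -/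
/-!
Each `B_g + D_g` is a difference of multiples of the two powers of `t` adjacent to it, hence
divisible by the smaller one. Conversely, by cyclic symmetry we may assume `t ^ l₁` is the largest
power; then `α₁ = 0` works: the divisibility hypotheses solve the two equations involving `α₁`,
and the third follows from the sum relation.
-/

open PowerSeries

section CyclicDiff

variable {A : Type*} [CommRing A] {x₁ x₂ x₃ w₁ w₂ w₃ : A}

def IsCyclicDiffOfMultiples (x₁ x₂ x₃ w₁ w₂ w₃ : A) : Prop :=
  ∃ α₁ α₂ α₃ : A,
    x₃ * α₃ - x₁ * α₁ = w₁ ∧ x₂ * α₂ - x₃ * α₃ = w₃ ∧ x₁ * α₁ - x₂ * α₂ = w₂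

theorem IsCyclicDiffOfMultiples.rotate (h : IsCyclicDiffOfMultiples x₁ x₂ x₃ w₁ w₂ w₃) :
    IsCyclicDiffOfMultiples x₂ x₃ x₁ w₂ w₃ w₁ := by
  obtain ⟨α₁, α₂, α₃, h₁, h₃, h₂⟩ := h
  exact ⟨α₂, α₃, α₁, h₂, h₁, h₃⟩

theorem IsCyclicDiffOfMultiples.dvd {d : A} (h : IsCyclicDiffOfMultiples x₁ x₂ x₃ w₁ w₂ w₃)
    (hd₃ : d ∣ x₃) (hd₁ : d ∣ x₁) : d ∣ w₁ := by
  obtain ⟨α₁, α₂, α₃, h₁, -, -⟩ := h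
  exact h₁ ▸ dvd_sub (hd₃.mul_right α₃) (hd₁.mul_right α₁)

theorem isCyclicDiffOfMultiples_of_dvd (x₁ : A) (hw : w₁ + w₂ + w₃ = 0)
    (h₁ : x₃ ∣ w₁) (h₂ : x₂ ∣ w₂) : IsCyclicDiffOfMultiples x₁ x₂ x₃ w₁ w₂ w₃ := by
  obtain ⟨β₃, rfl⟩ := h₁
  obtain ⟨β₂, rfl⟩ := h₂
  exact ⟨0, -β₂, β₃, by ring, by linear_combination -hw, by ring⟩

theorem isCyclicDiffOfMultiples_pow_of_le (a : A) {l₁ l₂ l₃ : ℕ} (hw : w₁ + w₂ + w₃ = 0)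
    (hl₂ : l₂ ≤ l₁) (hl₃ : l₃ ≤ l₁) (h₁ : a ^ min l₃ l₁ ∣ w₁) (h₂ : a ^ min l₁ l₂ ∣ w₂) :
    IsCyclicDiffOfMultiples (a ^ l₁) (a ^ l₂) (a ^ l₃) w₁ w₂ w₃ := by
  rw [min_eq_left hl₃] at h₁
  rw [min_eq_right hl₂] at h₂
  exact isCyclicDiffOfMultiples_of_dvd _ hw h₁ h₂

theorem isCyclicDiffOfMultiples_pow_iff (a : A) (l₁ l₂ l₃ : ℕ) (hw : w₁ + w₂ + w₃ = 0) :
    IsCyclicDiffOfMultiples (a ^ l₁) (a ^ l₂) (a ^ l₃) w₁ w₂ w₃ ↔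
      a ^ min l₃ l₁ ∣ w₁ ∧ a ^ min l₁ l₂ ∣ w₂ ∧ a ^ min l₂ l₃ ∣ w₃ := by
  have pow_min_dvd (m n : ℕ) : a ^ min m n ∣ a ^ m ∧ a ^ min m n ∣ a ^ n :=
    ⟨pow_dvd_pow a (min_le_left m n), pow_dvd_pow a (min_le_right m n)⟩
  refine ⟨fun h ↦ ?_, fun ⟨h₁, h₂, h₃⟩ ↦ ?_⟩
  · exact ⟨h.dvd (pow_min_dvd _ _).1 (pow_min_dvd _ _).2,
      h.rotate.dvd (pow_min_dvd _ _).1 (pow_min_dvd _ _).2,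
      h.rotate.rotate.dvd (pow_min_dvd _ _).1 (pow_min_dvd _ _).2⟩
  obtain ⟨h21, h31⟩ | ⟨h12, h32⟩ | ⟨h13, h23⟩ :
      (l₂ ≤ l₁ ∧ l₃ ≤ l₁) ∨ (l₁ ≤ l₂ ∧ l₃ ≤ l₂) ∨ (l₁ ≤ l₃ ∧ l₂ ≤ l₃) := by omega
  · exact isCyclicDiffOfMultiples_pow_of_le a hw h21 h31 h₁ h₂
  · have hw' : w₂ + w₃ + w₁ = 0 := by linear_combination hw
    exact (isCyclicDiffOfMultiples_pow_of_le a hw' h32 h12 h₂ h₃).rotate.rotate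
  · have hw' : w₃ + w₁ + w₂ = 0 := by linear_combination hw
    exact (isCyclicDiffOfMultiples_pow_of_le a hw' h13 h23 h₃ h₁).rotate

end CyclicDiff

theorem stmt_7_general (l₁ l₂ l₃ : ℕ)
    (B₁ B₂ B₃ D₁ D₂ D₃ : R)
    (hsum : (B₁ + D₁) + (B₂ + D₂) + (B₃ + D₃) = 0) :
    (∃ α₁ α₂ α₃ : R,
        X ^ l₃ * α₃ - X ^ l₁ * α₁ = B₁ + D₁ ∧
        X ^ l₂ * α₂ - X ^ l₃ * α₃ = B₃ + D₃ ∧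
        X ^ l₁ * α₁ - X ^ l₂ * α₂ = B₂ + D₂) ↔
      (X ^ (min l₃ l₁) ∣ B₁ + D₁ ∧
       X ^ (min l₁ l₂) ∣ B₂ + D₂ ∧
       X ^ (min l₂ l₃) ∣ B₃ + D₃) :=
  isCyclicDiffOfMultiples_pow_iff X l₁ l₂ l₃ hsum

theorem stmt_7 (l₁ l₂ l₃ : ℕ) (hl₁ : 0 < l₁) (hl₂ : 0 < l₂) (hl₃ : 0 < l₃)
    (B₁ B₂ B₃ D₁ D₂ D₃ : R)
    (hsum : (B₁ + D₁) + (B₂ + D₂) + (B₃ + D₃) = 0) :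
    (∃ α₁ α₂ α₃ : R,
        X ^ l₃ * α₃ - X ^ l₁ * α₁ = B₁ + D₁ ∧
        X ^ l₂ * α₂ - X ^ l₃ * α₃ = B₃ + D₃ ∧
        X ^ l₁ * α₁ - X ^ l₂ * α₂ = B₂ + D₂) ↔
      (X ^ (min l₃ l₁) ∣ B₁ + D₁ ∧
       X ^ (min l₁ l₂) ∣ B₂ + D₂ ∧
       X ^ (min l₂ l₃) ∣ B₃ + D₃) :=
  stmt_7_general l₁ l₂ l₃ B₁ B₂ B₃ D₁ D₂ D₃ hsum
end

section
/- Let l₁ ≤ l₂ ≤ l₃ be positive integers. The number of triples (s₁, s₂, s₃) of nonnegative integers with s₁ < l₁, s₂ < l₁ (i.e. s₂ < min(l₁,l₂)), s₃ < l₂ (i.e. s₃ < min(l₂,l₃)), and such that the minimum of {s₁, s₂, s₃} is attained at least twice, equals l₁·(l₂ + (l₁−1)/2) = (l₁(l₁−1))/2 + l₁·l₂. -/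
/-!
Fix `(s₁, s₂)`. If `s₁ = s₂` the admissible `s₃` are those with `s₁ ≤ s₃ < l₂`; otherwise the
only one is `s₃ = min s₁ s₂`. Summing over `s₂` gives `(l₂ - s₁) + (l₁ - 1)`, and summing over
`s₁` gives `l₁ (l₁ - 1) + (l₁ l₂ - l₁ (l₁ - 1) / 2)`.
-/

open Finset

lemma card_filter_min_attained_twice (n x y : ℕ) (hx : x < n) :
    ((range n).filter (fun z => (x = y ∧ x ≤ z) ∨ (x = z ∧ x ≤ y) ∨ (y = z ∧ y ≤ x))).card
      = if x = y then n - x else 1 := by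
  split_ifs with hxy
  · subst hxy
    rw [← Nat.card_Ico]
    congr 1
    ext z
    simp only [mem_filter, mem_range, mem_Ico, true_and]
    omega
  · rw [card_eq_one]
    refine ⟨min x y, ?_⟩
    ext z
    simp only [mem_filter, mem_range, mem_singleton]
    omega

lemma sum_range_ite_eq_else_one (m x a : ℕ) (hx : x < m) :
    ∑ y ∈ range m, (if x = y then a else 1) = a + (m - 1) := by
  rw [← add_sum_erase _ _ (mem_range.mpr hx), if_pos rfl,
    sum_congr rfl fun y hy => if_neg (ne_of_mem_erase hy).symm, sum_const,
    card_erase_of_mem (mem_range.mpr hx), card_range, smul_eq_mul, mul_one]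

lemma sum_range_tsub_add_triangle {m n : ℕ} (hmn : m ≤ n) :
    ∑ x ∈ range m, (n - x) + m * (m - 1) / 2 = m * n := by
  rw [← sum_range_id, ← sum_add_distrib,
    sum_congr rfl fun x hx => Nat.sub_add_cancel ((mem_range.mp hx).le.trans hmn),
    sum_const, card_range, smul_eq_mul]

theorem stmt_9_general (l₁ l₂ : ℕ) (h12 : l₁ ≤ l₂) :
    ((Finset.range l₁ ×ˢ Finset.range l₁ ×ˢ Finset.range l₂).filter
        (fun p : ℕ × ℕ × ℕ =>
          (p.1 = p.2.1 ∧ p.1 ≤ p.2.2) ∨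
          (p.1 = p.2.2 ∧ p.1 ≤ p.2.1) ∨
          (p.2.1 = p.2.2 ∧ p.2.1 ≤ p.1))).card
      = l₁ * (l₁ - 1) / 2 + l₁ * l₂ := by
  have fibers : ∀ x ∈ range l₁, ∑ y ∈ range l₁, ((range l₂).filter
      (fun z => (x = y ∧ x ≤ z) ∨ (x = z ∧ x ≤ y) ∨ (y = z ∧ y ≤ x))).card
        = (l₂ - x) + (l₁ - 1) := fun x hx => by
    rw [mem_range] at hx
    rw [← sum_range_ite_eq_else_one l₁ x _ hx]
    exact sum_congr rfl fun y _ =>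
      card_filter_min_attained_twice l₂ x y (hx.trans_le h12)
  simp only [card_filter, sum_product] at fibers ⊢
  rw [sum_congr rfl fibers, sum_add_distrib, sum_const, card_range, smul_eq_mul]
  have triangle := sum_range_tsub_add_triangle h12
  have even : 2 ∣ l₁ * (l₁ - 1) := (Nat.even_mul_pred_self l₁).two_dvd
  omega

theorem stmt_9 (l₁ l₂ l₃ : ℕ) (hl₁ : 0 < l₁) (h12 : l₁ ≤ l₂) (h23 : l₂ ≤ l₃) :
    ((Finset.range l₁ ×ˢ Finset.range l₁ ×ˢ Finset.range l₂).filter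
        (fun p : ℕ × ℕ × ℕ =>
          (p.1 = p.2.1 ∧ p.1 ≤ p.2.2) ∨
          (p.1 = p.2.2 ∧ p.1 ≤ p.2.1) ∨
          (p.2.1 = p.2.2 ∧ p.2.1 ≤ p.1))).card
      = l₁ * (l₁ - 1) / 2 + l₁ * l₂ :=
  stmt_9_general l₁ l₂ h12
end

section
/- Let R = ℂ[[t]] and let b₁,…,b₈ ∈ R with ∑ᵢ bᵢ = 0. Suppose a, b, c, d ∈ R satisfy t ∣ c, t ∣ (d−a)(b₁+b₂) − (b₁+b₂)²(c/t), t ∣ (d−a)(b₁+b₂+b₃+b₄) − (b₁+b₂+b₃+b₄)²(c/t), and t ∣ (d−a)(b₁+⋯+b₆) − (b₁+⋯+b₆)²(c/t). If t ∤ b₁+b₂, t ∤ b₃+b₄, t ∤ b₅+b₆, and t ∣ b₇+b₈, and if the matrix [[a,b],[c,d]] is idempotent, then this matrix is either 0 or the identity. -/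
open PowerSeries Matrix

/-!
Modulo `t`, write `s = b₁ + b₂` and `s' = b₁ + ⋯ + b₄`; then `s' = -(b₅ + b₆) - (b₇ + b₈)`, so `s`,
`s'` and `s' - s = b₃ + b₄` are all nonzero. The two divisibility conditions say
`(d - a) s = s² k` and `(d - a) s' = s'² k` for `k = c/t`, which forces `k = 0` and `a ≡ d`.
With `t ∣ c` the reduction of the idempotent is an idempotent `[[x, y], [0, x]]` over `ℂ`, hence
`0` or `1`. Reduction of matrices over the local ring `ℂ⟦t⟧` is a local homomorphism, and an
idempotent that reduces to `1` is a unit, hence `1`; applying this to `1 - E` handles `0`.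
-/

instance PowerSeries.isLocalHom_constantCoeff {A : Type*} [CommRing A] :
    IsLocalHom (constantCoeff : A⟦X⟧ →+* A) :=
  ⟨fun _ => isUnit_iff_constantCoeff.2⟩

instance RingHom.isLocalHom_mapMatrix {n A B : Type*} [Fintype n] [DecidableEq n] [CommRing A]
    [CommRing B] (f : A →+* B) [IsLocalHom f] :
    IsLocalHom (f.mapMatrix : Matrix n n A →+* Matrix n n B) where
  map_nonunit M hM := by
    rw [Matrix.isUnit_iff_isUnit_det, ← RingHom.map_det] at hM
    exact (Matrix.isUnit_iff_isUnit_det M).2 (isUnit_of_map_unit f _ hM)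

namespace IsIdempotentElem

variable {A B : Type*} [Ring A] [Ring B] (f : A →+* B) [IsLocalHom f] {e : A}

theorem eq_one_of_map_eq_one (he : IsIdempotentElem e) (h : f e = 1) : e = 1 :=
  (iff_eq_one_of_isUnit (isUnit_of_map_unit f e (h ▸ isUnit_one))).1 he

theorem eq_zero_of_map_eq_zero (he : IsIdempotentElem e) (h : f e = 0) : e = 0 :=
  sub_eq_self.1 (he.one_sub.eq_one_of_map_eq_one f (by rw [map_sub, map_one, h, sub_zero]))

theorem eq_zero_or_eq_one_of_map (he : IsIdempotentElem e) (h : f e = 0 ∨ f e = 1) :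
    e = 0 ∨ e = 1 :=
  h.imp (he.eq_zero_of_map_eq_zero f) (he.eq_one_of_map_eq_one f)

end IsIdempotentElem

theorem Matrix.eq_zero_or_eq_one_of_isIdempotentElem_fin_two_upper {K : Type*} [CommRing K]
    [IsDomain K] {x y : K} (h : IsIdempotentElem !![x, y; 0, x]) :
    !![x, y; 0, x] = 0 ∨ !![x, y; 0, x] = 1 := by
  have hx : x * x = x := by simpa using congrFun (congrFun h 0) 0
  have hy : x * y + y * x = y := by simpa using congrFun (congrFun h 0) 1
  rcases (IsIdempotentElem.iff_eq_zero_or_one).1 hx with rfl | rfl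
  · left
    have : y = 0 := by simpa using hy.symm
    simp [this, ← Matrix.ext_iff, Fin.forall_fin_two]
  · right
    have : y = 0 := by linear_combination hy
    rw [this, Matrix.one_fin_two]

theorem eq_zero_of_mul_eq_sq_mul {K : Type*} [CommRing K] [IsDomain K] {δ k s s' : K}
    (h : δ * s = s ^ 2 * k) (h' : δ * s' = s' ^ 2 * k) (hs : s ≠ 0) (hs' : s' ≠ 0)
    (hss' : s' ≠ s) : δ = 0 := by
  have e : δ = s * k := mul_right_cancel₀ hs (by linear_combination h)
  have e' : δ = s' * k := mul_right_cancel₀ hs' (by linear_combination h')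
  have hk : k = 0 := (mul_eq_zero.1 (by linear_combination e - e' : (s' - s) * k = 0)).resolve_left
    (sub_ne_zero.2 hss')
  rw [e, hk, mul_zero]

theorem stmt_11_general (b₁ b₂ b₃ b₄ b₅ b₆ b₇ b₈ : R)
    (hsum : b₁ + b₂ + b₃ + b₄ + b₅ + b₆ + b₇ + b₈ = 0)
    (a b c d c' : R) (hc : X * c' = c)
    (h1 : X ∣ (d - a) * (b₁ + b₂) - (b₁ + b₂) ^ 2 * c')
    (h2 : X ∣ (d - a) * (b₁ + b₂ + b₃ + b₄) - (b₁ + b₂ + b₃ + b₄) ^ 2 * c')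
    (hb12 : ¬ X ∣ b₁ + b₂) (hb34 : ¬ X ∣ b₃ + b₄) (hb56 : ¬ X ∣ b₅ + b₆)
    (hb78 : X ∣ b₇ + b₈)
    (hidem : (!![a, b; c, d] : Matrix (Fin 2) (Fin 2) R) * !![a, b; c, d] = !![a, b; c, d]) :
    (!![a, b; c, d] : Matrix (Fin 2) (Fin 2) R) = 0 ∨
    (!![a, b; c, d] : Matrix (Fin 2) (Fin 2) R) = 1 := by
  simp only [X_dvd_iff, map_sub, map_mul, map_add, map_pow] at h1 h2 hb12 hb34 hb56 hb78
  have hs : constantCoeff b₁ + constantCoeff b₂ + constantCoeff b₃ + constantCoeff b₄ +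
      constantCoeff b₅ + constantCoeff b₆ + constantCoeff b₇ + constantCoeff b₈ = 0 := by
    simpa using congrArg constantCoeff hsum
  have hda : constantCoeff d = constantCoeff a := sub_eq_zero.1 <|
    eq_zero_of_mul_eq_sq_mul (sub_eq_zero.1 h1) (sub_eq_zero.1 h2) hb12
      (fun h => hb56 (by linear_combination hs - h - hb78))
      (fun h => hb34 (by linear_combination h))
  have hc0 : constantCoeff c = 0 := by simp [← hc]
  have hred : (constantCoeff : R →+* ℂ).mapMatrix !![a, b; c, d] =
      !![constantCoeff a, constantCoeff b; 0, constantCoeff a] := by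
    simp [← Matrix.ext_iff, Fin.forall_fin_two, hda, hc0]
  have hE : IsIdempotentElem (!![a, b; c, d] : Matrix (Fin 2) (Fin 2) R) := hidem
  refine hE.eq_zero_or_eq_one_of_map (constantCoeff : R →+* ℂ).mapMatrix ?_
  rw [hred]
  exact eq_zero_or_eq_one_of_isIdempotentElem_fin_two_upper (hred ▸ hE.map _)

theorem stmt_11 (b₁ b₂ b₃ b₄ b₅ b₆ b₇ b₈ : R)
    (hsum : b₁ + b₂ + b₃ + b₄ + b₅ + b₆ + b₇ + b₈ = 0)
    (a b c d c' : R) (hc : X * c' = c)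
    (h1 : X ∣ (d - a) * (b₁ + b₂) - (b₁ + b₂) ^ 2 * c')
    (h2 : X ∣ (d - a) * (b₁ + b₂ + b₃ + b₄) - (b₁ + b₂ + b₃ + b₄) ^ 2 * c')
    (h3 : X ∣ (d - a) * (b₁ + b₂ + b₃ + b₄ + b₅ + b₆) -
        (b₁ + b₂ + b₃ + b₄ + b₅ + b₆) ^ 2 * c')
    (hb12 : ¬ X ∣ b₁ + b₂) (hb34 : ¬ X ∣ b₃ + b₄) (hb56 : ¬ X ∣ b₅ + b₆)
    (hb78 : X ∣ b₇ + b₈)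
    (hidem : (!![a, b; c, d] : Matrix (Fin 2) (Fin 2) R) * !![a, b; c, d] = !![a, b; c, d]) :
    (!![a, b; c, d] : Matrix (Fin 2) (Fin 2) R) = 0 ∨
    (!![a, b; c, d] : Matrix (Fin 2) (Fin 2) R) = 1 :=
  stmt_11_general b₁ b₂ b₃ b₄ b₅ b₆ b₇ b₈ hsum a b c d c' hc h1 h2 hb12 hb34 hb56 hb78 hidem
end

section
/- Let R = ℂ[[t]] and let b₁,…,b₈, c₁,…,c₈ ∈ R, each 8-tuple summing to zero, with t ∤ bᵢ+bᵢ₊₁ and t ∤ cᵢ+cᵢ₊₁ for i = 1,3,5,7, and t ∤ bᵢ+bᵢ₊₁+bᵢ₊₂+bᵢ₊₃ and t ∤ cᵢ+cᵢ₊₁+cᵢ₊₂+cᵢ₊₃ for i = 1,3,5,7 (cyclically). If there exist α, β, γ, δ ∈ R with αδ − βγ a unit, t ∣ γ, and satisfying t ∣ −α(b₁+b₂)+(c₁+c₂)δ−(b₁+b₂)(c₁+c₂)(γ/t), t ∣ −α(b₁+b₂+b₃+b₄)+(c₁+c₂+c₃+c₄)δ−(b₁+b₂+b₃+b₄)(c₁+c₂+c₃+c₄)(γ/t),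 and t ∣ α(b₇+b₈)−(c₇+c₈)δ−(b₇+b₈)(c₇+c₈)(γ/t), then t ∣ (b₁+b₂)(c₃+c₄)(b₅+b₆)(c₇+c₈) − (c₁+c₂)(b₃+b₄)(c₅+c₆)(b₇+b₈). -/
open PowerSeries Matrix

/-!
Reduce modulo `t`. Writing `a, d, g` for the constant terms of `α, δ, γ/t` and `Bᵢ, Cᵢ` for those of
`b₂ᵢ₋₁ + b₂ᵢ, c₂ᵢ₋₁ + c₂ᵢ`, the three divisibility hypotheses say that the points `P₁ = (B₁, C₁)`,
`P₂ = P₁ + (B₂, C₂)`, `P₃ = -(B₄, C₄)` and `P₀ = 0` lie on the conic `d y - a x = g x y`, and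
`a d ≠ 0` because `t ∣ γ`. This conic is the hyperbola `(d - g x)(a + g y) = a d`, and its chord `PP'`
satisfies `a d (y' - y) = (x' - x)(a + g y)(a + g y')`. Hence in the quadrilateral `P₀P₁P₂P₃` the
products of the slopes of opposite sides agree, which is the claim.
-/

section Conic

variable {K : Type*} [CommRing K]

def OnConic (a d g x y : K) : Prop :=
  -a * x + y * d - x * y * g = 0

theorem onConic_zero (a d g : K) : OnConic a d g 0 0 := by
  simp [OnConic]

theorem OnConic.chord_slope {a d g x y x' y' : K} (h : OnConic a d g x y)
    (h' : OnConic a d g x' y') :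
    a * d * (y' - y) = (x' - x) * (a + g * y) * (a + g * y') := by
  unfold OnConic at h h'
  linear_combination (a + g * y') * (h' - h) - g * (y' - y) * h'

theorem OnConic.opposite_sides_mul_eq [NoZeroDivisors K] {a d g x₀ y₀ x₁ y₁ x₂ y₂ x₃ y₃ : K}
    (had : a * d ≠ 0) (h₀ : OnConic a d g x₀ y₀) (h₁ : OnConic a d g x₁ y₁)
    (h₂ : OnConic a d g x₂ y₂) (h₃ : OnConic a d g x₃ y₃) :
    (x₁ - x₀) * (y₂ - y₁) * (x₃ - x₂) * (y₀ - y₃) =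
      (y₁ - y₀) * (x₂ - x₁) * (y₃ - y₂) * (x₀ - x₃) := by
  have c₁ := h₀.chord_slope h₁
  have c₂ := h₁.chord_slope h₂
  have c₃ := h₂.chord_slope h₃
  have c₄ := h₃.chord_slope h₀
  -- both sides times `(a d)²` equal `∏ (xᵢ₊₁ - xᵢ) * ∏ (a + g yᵢ)`
  refine (mul_right_injective₀ (pow_ne_zero 2 had)).eq_iff.mp ?_
  linear_combination (x₁ - x₀) * (x₃ - x₂) * (a * d * (y₀ - y₃)) * c₂
    + (x₁ - x₀) * (x₃ - x₂) * ((x₂ - x₁) * (a + g * y₁) * (a + g * y₂)) * c₄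
    - (x₂ - x₁) * (x₀ - x₃) * (a * d * (y₃ - y₂)) * c₁
    - (x₂ - x₁) * (x₀ - x₃) * ((x₁ - x₀) * (a + g * y₀) * (a + g * y₁)) * c₃

end Conic

theorem stmt_14_general (b₁ b₂ b₃ b₄ b₅ b₆ b₇ b₈ c₁ c₂ c₃ c₄ c₅ c₆ c₇ c₈ : R)
    (hbsum : b₁ + b₂ + b₃ + b₄ + b₅ + b₆ + b₇ + b₈ = 0)
    (hcsum : c₁ + c₂ + c₃ + c₄ + c₅ + c₆ + c₇ + c₈ = 0)
    (hex : ∃ α β γ δ g : R, IsUnit (α * δ - β * γ) ∧ X ∣ γ ∧ X * g = γ ∧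
        X ∣ (-α * (b₁ + b₂) + (c₁ + c₂) * δ - (b₁ + b₂) * (c₁ + c₂) * g) ∧
        X ∣ (-α * (b₁ + b₂ + b₃ + b₄) + (c₁ + c₂ + c₃ + c₄) * δ -
          (b₁ + b₂ + b₃ + b₄) * (c₁ + c₂ + c₃ + c₄) * g) ∧
        X ∣ (α * (b₇ + b₈) - (c₇ + c₈) * δ - (b₇ + b₈) * (c₇ + c₈) * g)) :
    X ∣ ((b₁ + b₂) * (c₃ + c₄) * (b₅ + b₆) * (c₇ + c₈) -
      (c₁ + c₂) * (b₃ + b₄) * (c₅ + c₆) * (b₇ + b₈)) := by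
  obtain ⟨α, β, γ, δ, g, hunit, hγ, -, h₁, h₂, h₃⟩ := hex
  apply_fun constantCoeff at hbsum hcsum
  have hunit₀ := hunit.map constantCoeff
  simp only [X_dvd_iff, map_add, map_sub, map_mul, map_neg, map_zero]
    at hbsum hcsum hγ h₁ h₂ h₃ hunit₀ ⊢
  set φ : R →+* ℂ := constantCoeff
  have had : φ α * φ δ ≠ 0 := by
    simpa [hγ] using hunit₀.ne_zero
  have h₃' : OnConic (φ α) (φ δ) (φ g) (-(φ b₇ + φ b₈)) (-(φ c₇ + φ c₈)) := by
    unfold OnConic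
    linear_combination h₃
  have key := (onConic_zero _ _ _).opposite_sides_mul_eq had h₁ h₂ h₃'
  linear_combination key + (φ b₁ + φ b₂) * (φ c₃ + φ c₄) * (φ c₇ + φ c₈) * hbsum
    - (φ c₁ + φ c₂) * (φ b₃ + φ b₄) * (φ b₇ + φ b₈) * hcsum

theorem stmt_14 (b₁ b₂ b₃ b₄ b₅ b₆ b₇ b₈ c₁ c₂ c₃ c₄ c₅ c₆ c₇ c₈ : R)
    (hbsum : b₁ + b₂ + b₃ + b₄ + b₅ + b₆ + b₇ + b₈ = 0)
    (hcsum : c₁ + c₂ + c₃ + c₄ + c₅ + c₆ + c₇ + c₈ = 0)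
    (hb12 : ¬ X ∣ b₁ + b₂) (hb34 : ¬ X ∣ b₃ + b₄)
    (hb56 : ¬ X ∣ b₅ + b₆) (hb78 : ¬ X ∣ b₇ + b₈)
    (hc12 : ¬ X ∣ c₁ + c₂) (hc34 : ¬ X ∣ c₃ + c₄)
    (hc56 : ¬ X ∣ c₅ + c₆) (hc78 : ¬ X ∣ c₇ + c₈)
    (hb1234 : ¬ X ∣ b₁ + b₂ + b₃ + b₄)
    (hb3456 : ¬ X ∣ b₃ + b₄ + b₅ + b₆)
    (hb5678 : ¬ X ∣ b₅ + b₆ + b₇ + b₈)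
    (hb7812 : ¬ X ∣ b₇ + b₈ + b₁ + b₂)
    (hc1234 : ¬ X ∣ c₁ + c₂ + c₃ + c₄)
    (hc3456 : ¬ X ∣ c₃ + c₄ + c₅ + c₆)
    (hc5678 : ¬ X ∣ c₅ + c₆ + c₇ + c₈)
    (hc7812 : ¬ X ∣ c₇ + c₈ + c₁ + c₂)
    (hex : ∃ α β γ δ g : R, IsUnit (α * δ - β * γ) ∧ X ∣ γ ∧ X * g = γ ∧
        X ∣ (-α * (b₁ + b₂) + (c₁ + c₂) * δ - (b₁ + b₂) * (c₁ + c₂) * g) ∧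
        X ∣ (-α * (b₁ + b₂ + b₃ + b₄) + (c₁ + c₂ + c₃ + c₄) * δ -
          (b₁ + b₂ + b₃ + b₄) * (c₁ + c₂ + c₃ + c₄) * g) ∧
        X ∣ (α * (b₇ + b₈) - (c₇ + c₈) * δ - (b₇ + b₈) * (c₇ + c₈) * g)) :
    X ∣ ((b₁ + b₂) * (c₃ + c₄) * (b₅ + b₆) * (c₇ + c₈) -
      (c₁ + c₂) * (b₃ + b₄) * (c₅ + c₆) * (b₇ + b₈)) :=
  stmt_14_general b₁ b₂ b₃ b₄ b₅ b₆ b₇ b₈ c₁ c₂ c₃ c₄ c₅ c₆ c₇ c₈ hbsum hcsum hex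
end

section
/- Let R = ℂ[[t]] and let b₁,…,b₈ ∈ R with ∑bᵢ = 0, t ∤ bᵢ+bᵢ₊₁ for i = 1,3,5,7, and t ∤ b₁+b₂+b₃+b₄. If a, b, c, d ∈ R satisfy t ∣ c, t ∣ (d−a)(b₁+b₂) − (b₁+b₂)²(c/t), and t ∣ (d−a)(b₁+b₂+b₃+b₄) − (b₁+b₂+b₃+b₄)²(c/t), and the matrix [[a,b],[c,d]] is idempotent, then it is 0 or the identity. -/
/-!
Over a domain, a `2 × 2` idempotent whose trace is not `1` is `0` or `1`: `trace - 1` kills the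
off-diagonal entries, and the diagonal entries are then idempotents. So it suffices to exclude
`a + d = 1`. Modulo `X` we have `c ≡ 0`, and the two divisibility conditions force `d ≡ a`
because `b₁ + b₂`, `b₁ + b₂ + b₃ + b₄` and their difference `b₃ + b₄` are units. The constant
coefficient of `a` would then be an idempotent `α` of `ℂ` with `α + α = 1`, which is impossible.
-/

open PowerSeries Matrix

theorem Matrix.isIdempotentElem_fin_two_iff {S : Type*} [CommRing S] {a b c d : S} :
    IsIdempotentElem !![a, b; c, d] ↔
      a * a + b * c = a ∧ a * b + b * d = b ∧ c * a + d * c = c ∧ c * b + d * d = d := by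
  simp only [IsIdempotentElem, mul_fin_two, ← Matrix.ext_iff, Fin.forall_fin_two, of_apply,
    cons_val', cons_val_zero, cons_val_one, empty_val', cons_val_fin_one, and_assoc]

theorem Matrix.eq_zero_or_eq_one_of_isIdempotentElem_of_trace_ne_one {S : Type*} [CommRing S]
    [IsDomain S] {E : Matrix (Fin 2) (Fin 2) S} (hE : IsIdempotentElem E) (htr : E.trace ≠ 1) :
    E = 0 ∨ E = 1 := by
  rw [eta_fin_two E] at hE htr ⊢
  rw [trace_fin_two_of] at htr
  obtain ⟨h₀₀, h₀₁, h₁₀, h₁₁⟩ := isIdempotentElem_fin_two_iff.mp hE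
  have htr' : E 0 0 + E 1 1 - 1 ≠ 0 := sub_ne_zero.mpr htr
  have hb : E 0 1 = 0 := by
    have h : E 0 1 * (E 0 0 + E 1 1 - 1) = 0 := by linear_combination h₀₁
    exact (mul_eq_zero.mp h).resolve_right htr'
  have hc : E 1 0 = 0 := by
    have h : E 1 0 * (E 0 0 + E 1 1 - 1) = 0 := by linear_combination h₁₀
    exact (mul_eq_zero.mp h).resolve_right htr'
  have ha : IsIdempotentElem (E 0 0) := by
    simpa only [IsIdempotentElem, hc, mul_zero, add_zero] using h₀₀
  have hd : IsIdempotentElem (E 1 1) := by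
    simpa only [IsIdempotentElem, hb, mul_zero, zero_add] using h₁₁
  rw [hb, hc]
  rcases IsIdempotentElem.iff_eq_zero_or_one.mp ha with ha | ha <;>
    rcases IsIdempotentElem.iff_eq_zero_or_one.mp hd with hd | hd <;>
    simp_all [← Matrix.ext_iff, Fin.forall_fin_two, one_fin_two]

theorem IsIdempotentElem.add_self_ne_one {S : Type*} [Ring S] [Nontrivial S] {e : S}
    (he : IsIdempotentElem e) : e + e ≠ 1 := by
  intro h
  have he1 : e = 1 := by rw [← mul_one e, ← h, mul_add, he.eq, h]
  rw [he1, add_eq_right] at h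
  exact one_ne_zero h

theorem eq_zero_of_mul_eq_mul_sq {K : Type*} [CommRing K] [IsDomain K] {s u x y : K}
    (hs : s ≠ 0) (hu : u ≠ 0) (hsu : s ≠ u) (h₁ : x * s = s ^ 2 * y) (h₂ : x * u = u ^ 2 * y) :
    x = 0 := by
  have hxs : x = s * y := mul_right_cancel₀ hs (by linear_combination h₁)
  have hxu : x = u * y := mul_right_cancel₀ hu (by linear_combination h₂)
  have hy : y = 0 :=
    (mul_eq_zero.mp (by linear_combination hxu - hxs : (s - u) * y = 0)).resolve_left
      (sub_ne_zero.mpr hsu)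
  rw [hxs, hy, mul_zero]

theorem stmt_18_general (b₁ b₂ b₃ b₄ : R)
    (h12 : ¬ X ∣ b₁ + b₂) (h34 : ¬ X ∣ b₃ + b₄)
    (h1234 : ¬ X ∣ b₁ + b₂ + b₃ + b₄)
    (a b c d c' : R) (hc : X * c' = c)
    (hd1 : X ∣ (d - a) * (b₁ + b₂) - (b₁ + b₂) ^ 2 * c')
    (hd2 : X ∣ (d - a) * (b₁ + b₂ + b₃ + b₄) - (b₁ + b₂ + b₃ + b₄) ^ 2 * c')
    (hidem : (!![a, b; c, d] : Matrix (Fin 2) (Fin 2) R) * !![a, b; c, d] = !![a, b; c, d]) :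
    (!![a, b; c, d] : Matrix (Fin 2) (Fin 2) R) = 0 ∨
    (!![a, b; c, d] : Matrix (Fin 2) (Fin 2) R) = 1 := by
  refine eq_zero_or_eq_one_of_isIdempotentElem_of_trace_ne_one hidem ?_
  rw [trace_fin_two_of]
  intro htr
  have hc₀ : constantCoeff c = 0 := X_dvd_iff.mp ⟨c', hc.symm⟩
  have hda : constantCoeff (d - a) = 0 := by
    refine eq_zero_of_mul_eq_mul_sq (y := constantCoeff c') (mt X_dvd_iff.mpr h12)
      (mt X_dvd_iff.mpr h1234) ?_ ?_ ?_
    · intro h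
      apply h34 (X_dvd_iff.mpr _)
      simp only [map_add] at h ⊢
      linear_combination -h
    · simpa [sub_eq_zero] using X_dvd_iff.mp hd1
    · simpa [sub_eq_zero] using X_dvd_iff.mp hd2
  have ha : IsIdempotentElem (constantCoeff a) := by
    have h₀₀ := congrArg constantCoeff (isIdempotentElem_fin_two_iff.mp hidem).1
    simpa [IsIdempotentElem, hc₀] using h₀₀
  refine ha.add_self_ne_one ?_
  rw [map_sub, sub_eq_zero] at hda
  simpa [hda] using congrArg constantCoeff htr

theorem stmt_18 (b₁ b₂ b₃ b₄ b₅ b₆ b₇ b₈ : R)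
    (hsum : b₁ + b₂ + b₃ + b₄ + b₅ + b₆ + b₇ + b₈ = 0)
    (h12 : ¬ X ∣ b₁ + b₂) (h34 : ¬ X ∣ b₃ + b₄)
    (h56 : ¬ X ∣ b₅ + b₆) (h78 : ¬ X ∣ b₇ + b₈)
    (h1234 : ¬ X ∣ b₁ + b₂ + b₃ + b₄)
    (a b c d c' : R) (hc : X * c' = c)
    (hd1 : X ∣ (d - a) * (b₁ + b₂) - (b₁ + b₂) ^ 2 * c')
    (hd2 : X ∣ (d - a) * (b₁ + b₂ + b₃ + b₄) - (b₁ + b₂ + b₃ + b₄) ^ 2 * c')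
    (hidem : (!![a, b; c, d] : Matrix (Fin 2) (Fin 2) R) * !![a, b; c, d] = !![a, b; c, d]) :
    (!![a, b; c, d] : Matrix (Fin 2) (Fin 2) R) = 0 ∨
    (!![a, b; c, d] : Matrix (Fin 2) (Fin 2) R) = 1 :=
  stmt_18_general b₁ b₂ b₃ b₄ h12 h34 h1234 a b c d c' hc hd1 hd2 hidem
end
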